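/- arXiv:math/0304403 — 2 statements merged into one kernel-verified Lean document; each statement's English description precedes it below -/
import Mathlib

section
/- Fix integers 1 ≤ r ≤ n. Let R be a commutative ring and c ∈ R. Let α₁ > α₂ > ⋯ > α_r ≥ 0 be integers, let 1 ≤ j ≤ r be an index with α_j ≥ n, and assume that α_j − n is not equal to any α_i, 1 ≤ i ≤ r. Let k be the largest index with α_k > α_j − n (so k ≥ j), and let α' be the strictly decreasing sequence (α₁, …, α_{j−1}, α_{j+1}, …, α_k, α_j − n, α_{k+1}, …, α_r). Then D_α − (−1)^{k−j}·c·D_{α'} lies in the ideal I_P(c) of R[x₁,…,x_r] generated by x₁^n − c, …, x_r^n − c. -/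
open Finset MvPolynomial

/-- The complete homogeneous symmetric polynomial of degree `k` in the variables
`x₁, …, x_r`: the sum of all monomials of total degree `k`. -/
noncomputable def hsymm (R : Type*) [CommRing R] (r k : ℕ) : MvPolynomial (Fin r) R :=
  ∑ d ∈ (Fintype.piFinset fun _ : Fin r => Finset.range (k + 1)).filter
      (fun d => ∑ i, d i = k),
    ∏ i, X i ^ d i

/-- The Vandermonde determinant `Δ = ∏_{1 ≤ i < j ≤ r} (xᵢ - xⱼ)`. -/
noncomputable def vander (R : Type*) [CommRing R] (r : ℕ) : MvPolynomial (Fin r) R :=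
  ∏ p ∈ Finset.univ.filter (fun p : Fin r × Fin r => p.1 < p.2), (X p.1 - X p.2)

/-- The ideal `I_P(c) = ⟨x₁ⁿ - c, …, x_rⁿ - c⟩` of `R[x₁,…,x_r]`. -/
noncomputable def IP (R : Type*) [CommRing R] (r n : ℕ) (c : R) :
    Ideal (MvPolynomial (Fin r) R) :=
  Ideal.span (Set.range fun i : Fin r => X i ^ n - C c)

/-- `Dalpha R r α = det (xᵢ^{αⱼ})_{1 ≤ i,j ≤ r}`. -/
noncomputable def Dalpha (R : Type*) [CommRing R] (r : ℕ) (α : Fin r → ℕ) :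
    MvPolynomial (Fin r) R :=
  Matrix.det (Matrix.of fun i j : Fin r => X i ^ α j)
/-! Since `xᵢ^{αⱼ} - c·xᵢ^{αⱼ-n} = xᵢ^{αⱼ-n}(xᵢⁿ - c)`, modulo `I_P(c)` the `j`-th column of
`(xᵢ^{αₗ})` is `c` times the column `(xᵢ^{αⱼ-n})`, so `D_α ≡ c·D_β` where `β` is `α` with `αⱼ`
replaced by `αⱼ - n`. The sequence `α'` lists the entries of `β` with the positions `j, …, k`
rotated by the cycle `(j j+1 … k)`, whose sign is `(-1)^{k-j}`. -/

section

variable {R : Type*} [CommRing R] {r : ℕ}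

theorem X_pow_sub_C_mul_X_pow_sub_mem_IP (n : ℕ) (c : R) (i : Fin r) {a : ℕ} (ha : n ≤ a) :
    X i ^ a - C c * X i ^ (a - n) ∈ IP R r n c := by
  have h : (X i ^ a - C c * X i ^ (a - n) : MvPolynomial (Fin r) R)
      = X i ^ (a - n) * (X i ^ n - C c) := by
    rw [mul_sub, ← pow_add, Nat.sub_add_cancel ha, mul_comm]
  exact h ▸ Ideal.mul_mem_left _ _ (Ideal.subset_span ⟨i, rfl⟩)

theorem Dalpha_sub_C_mul_Dalpha_update_mem_IP {n : ℕ} (c : R) (α : Fin r → ℕ) {j : Fin r}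
    (hjn : n ≤ α j) :
    Dalpha R r α - C c * Dalpha R r (Function.update α j (α j - n)) ∈ IP R r n c := by
  have hcols : (Ideal.Quotient.mk (IP R r n c)).mapMatrix (Matrix.of fun i j' => X i ^ α j') =
      (Ideal.Quotient.mk (IP R r n c)).mapMatrix
        (Matrix.of fun i j' => X i ^ Function.update α j (α j - n) j') *
        Matrix.diagonal (Pi.mulSingle j (Ideal.Quotient.mk (IP R r n c) (C c))) := by
    ext i j'
    rw [Matrix.mul_diagonal]
    simp only [RingHom.mapMatrix_apply, Matrix.map_apply, Matrix.of_apply]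
    rcases eq_or_ne j' j with rfl | hj'
    · rw [Function.update_self, Pi.mulSingle_eq_same, ← map_mul, mul_comm, Ideal.Quotient.eq]
      exact X_pow_sub_C_mul_X_pow_sub_mem_IP n c i hjn
    · rw [Function.update_of_ne hj', Pi.mulSingle_eq_of_ne hj', mul_one]
  rw [← Ideal.Quotient.eq, map_mul, Dalpha, Dalpha,
    RingHom.map_det, RingHom.map_det, hcols, Matrix.det_mul, Matrix.det_diagonal,
    Finset.prod_pi_mulSingle', if_pos (Finset.mem_univ j), mul_comm]

theorem Dalpha_comp_perm (α : Fin r → ℕ) (σ : Equiv.Perm (Fin r)) :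
    Dalpha R r (α ∘ σ) = (Equiv.Perm.sign σ : ℤ) * Dalpha R r α :=
  Matrix.det_permute' σ (Matrix.of fun i j => X i ^ α j)

end

theorem rimHook_eq_update_comp_cycleIcc {r : ℕ} (α : Fin r → ℕ) (v : ℕ) {j k : Fin r}
    (hjk : j ≤ k) :
    (fun i => if i < j then α i
      else if h : i < k then
        α ⟨(i : ℕ) + 1, by have := k.isLt; have := Fin.lt_def.mp h; omega⟩
      else if i = k then v
      else α i) = Function.update α j v ∘ Fin.cycleIcc j k := by
  have := j.neZero
  funext i
  simp only [Function.comp_apply]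
  rcases lt_or_ge i j with hij | hji
  · rw [if_pos hij, Fin.cycleIcc_of_lt hij, Function.update_of_ne hij.ne]
  rw [if_neg hji.not_gt]
  rcases lt_trichotomy i k with hik | rfl | hki
  · have hsucc : (i + 1).val = i.val + 1 := Fin.val_add_one_of_lt' (by omega)
    rw [dif_pos hik, Fin.cycleIcc_of_ge_of_lt hji hik,
      Function.update_of_ne (fun h => by rw [Fin.ext_iff, hsucc] at h; omega)]
    exact congrArg α (Fin.ext hsucc.symm)
  · rw [dif_neg (lt_irrefl i), if_pos rfl, Fin.cycleIcc_of_last hjk, Function.update_self]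
  · rw [dif_neg hki.not_gt, if_neg hki.ne', Fin.cycleIcc_of_gt hki,
      Function.update_of_ne (hjk.trans_lt hki).ne']

/-- The rim-hook reduction in determinantal form (first proof of Theorem 2.5):
for a strictly decreasing sequence `α₁ > ⋯ > α_r ≥ 0`, an index `j` with `αⱼ ≥ n` such
that `αⱼ - n` is not among the `αᵢ`, and `k` the largest index with `α_k > αⱼ - n`
(so `k ≥ j`), letting `α' = (α₁, …, α_{j-1}, α_{j+1}, …, α_k, αⱼ - n, α_{k+1}, …, α_r)`,
we have `D_α - (-1)^{k-j} c D_{α'} ∈ I_P(c) = ⟨x₁ⁿ - c, …, x_rⁿ - c⟩`. -/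
theorem rim_hook_reduction (n r : ℕ)
    (R : Type*) [CommRing R] (c : R)
    (α : Fin r → ℕ)
    (j k : Fin r) (hjn : n ≤ α j)
    (hjk : j ≤ k) :
    Dalpha R r α - (-1) ^ ((k : ℕ) - (j : ℕ)) * C c * Dalpha R r
        (fun i => if i < j then α i
          else if h : i < k then
            α ⟨(i : ℕ) + 1, by have := k.isLt; have := Fin.lt_iff_val_lt_val.mp h; omega⟩
          else if i = k then α j - n
          else α i)
      ∈ IP R r n c := by
  have hsq : ((-1 : MvPolynomial (Fin r) R) ^ ((k : ℕ) - (j : ℕ))) ^ 2 = 1 := by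
    rw [← pow_mul, mul_comm, pow_mul, neg_one_sq, one_pow]
  rw [rimHook_eq_update_comp_cycleIcc α (α j - n) hjk, Dalpha_comp_perm,
    Fin.sign_cycleIcc_of_le hjk]
  convert Dalpha_sub_C_mul_Dalpha_update_mem_IP c α hjn using 2
  push_cast
  linear_combination (C c * Dalpha R r (Function.update α j (α j - n))) * hsq
end

section
/- Fix integers 1 ≤ r ≤ n. Let R be a commutative ring and c ∈ R. Let α₁ > α₂ > ⋯ > α_r ≥ 0 be integers, and suppose there are indices i ≠ j with α_j ≥ n and α_j − n = α_i. Then D_α lies in the ideal I_P(c) of R[x₁,…,x_r] generated by x₁^n − c, …, x_r^n − c. -/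
open Finset MvPolynomial

/-! Modulo `I_P(c)` every `xₖⁿ` becomes `c`, so the column of exponent `αⱼ = αᵢ + n` is `c`
times the column of exponent `αᵢ`, and the determinant vanishes. -/

theorem Matrix.det_of_pow_eq_zero_of_pow_eq_const {S ι : Type*} [CommRing S] [Fintype ι]
    [DecidableEq ι] (y : ι → S) (α : ι → ℕ) {n : ℕ} {c : S} (hy : ∀ k, y k ^ n = c)
    {i j : ι} (hij : i ≠ j) (hα : α j = α i + n) :
    (Matrix.of fun k l => y k ^ α l).det = 0 := by
  set M := Matrix.of fun k l => y k ^ α l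
  have hcol : M = M.updateCol j (c • fun k => M k i) := by
    ext k l
    rcases eq_or_ne l j with rfl | hl
    · simp [M, hα, pow_add, hy, mul_comm]
    · simp [hl]
  rw [hcol, Matrix.det_updateCol_smul, Matrix.det_updateCol_eq_zero hij, mul_zero]

theorem IP.mk_X_pow (R : Type*) [CommRing R] (r n : ℕ) (c : R) (k : Fin r) :
    Ideal.Quotient.mk (IP R r n c) (X k) ^ n = Ideal.Quotient.mk (IP R r n c) (C c) := by
  rw [← map_pow, Ideal.Quotient.eq]
  exact Ideal.subset_span ⟨k, rfl⟩

theorem determinant_vanishing_general (n r : ℕ)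
    (R : Type*) [CommRing R] (c : R)
    (α : Fin r → ℕ)
    (i j : Fin r) (hij : i ≠ j) (hjn : n ≤ α j) (heq : α j - n = α i) :
    Dalpha R r α ∈ IP R r n c := by
  rw [← Ideal.Quotient.eq_zero_iff_mem, Dalpha, RingHom.map_det]
  convert Matrix.det_of_pow_eq_zero_of_pow_eq_const
    (fun k => Ideal.Quotient.mk (IP R r n c) (X k)) α (IP.mk_X_pow R r n c) hij (by omega)
  ext k l
  simp [RingHom.mapMatrix_apply]

/-- The determinantal vanishing from the first proof of Theorem 2.5: if
`α₁ > ⋯ > α_r ≥ 0` is strictly decreasing and there are indices `i ≠ j` with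
`αⱼ ≥ n` and `αⱼ - n = αᵢ`, then `D_α ∈ I_P(c) = ⟨x₁ⁿ - c, …, x_rⁿ - c⟩`. -/
theorem determinant_vanishing (n r : ℕ) (hr : 1 ≤ r) (hrn : r ≤ n)
    (R : Type*) [CommRing R] (c : R)
    (α : Fin r → ℕ) (hα : StrictAnti α)
    (i j : Fin r) (hij : i ≠ j) (hjn : n ≤ α j) (heq : α j - n = α i) :
    Dalpha R r α ∈ IP R r n c :=
  determinant_vanishing_general n r R c α i j hij hjn heq
end
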